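/- arXiv:1805.09230 — 2 statements merged into one kernel-verified Lean document; each statement's English description precedes it below -/
import Mathlib

section
/- If f is a C^m function on ℝ^N, then for every x, h ∈ ℝ^N and every positive integer m, the m-th finite difference admits the integral representation Δ_h^m f(x) = ∫_{[0,1]^m} D^m f(x + (t_1 + ⋯ + t_m) h)(h, …, h) dt_1 ⋯ dt_m, where D^m f(x)(h,…,h) = Σ_{1 ≤ i_1,…,i_m ≤ N} h_{i_1} ⋯ h_{i_m} ∂^m f / (∂x_{i_1} ⋯ ∂x_{i_m})(x). -/
/-!
Induct on `m`. Writing `g_k y := D^k f y (h, …, h)`, the fundamental theorem of calculus along the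
segment `[y, y + h]` gives `g_m (y + h) - g_m y = ∫₀¹ g_{m+1} (y + s h) ds`. Apply it under the
integral over `[0,1]^m` representing `Δ_h^m f (x + h) - Δ_h^m f x`, and merge the new variable `s`
with `t ∈ [0,1]^m` into a point of `[0,1]^(m+1)` by Fubini.
-/

open MeasureTheory Filter Set

noncomputable section

abbrev E (N : ℕ) : Type := EuclideanSpace ℝ (Fin N)

noncomputable def iterDiff {N : ℕ} (f : E N → ℝ) (h : E N) : ℕ → E N → ℝ
  | 0 => f
  | m + 1 => fun x => iterDiff f h m (x + h) - iterDiff f h m x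

end

section IteratedDerivAlongLine

variable {V F : Type*} [NormedAddCommGroup V] [NormedSpace ℝ V]
  [NormedAddCommGroup F] [NormedSpace ℝ F] {f : V → F} {n : ℕ}

theorem continuous_iteratedFDeriv_apply_const (hf : ContDiff ℝ n f) (h : V) :
    Continuous fun y => iteratedFDeriv ℝ n f y (fun _ => h) := by
  fun_prop

theorem hasDerivAt_iteratedFDeriv_apply_add_smul (hf : ContDiff ℝ (n + 1) f) (x h : V) (s : ℝ) :
    HasDerivAt (fun s : ℝ => iteratedFDeriv ℝ n f (x + s • h) (fun _ => h))
      (iteratedFDeriv ℝ (n + 1) f (x + s • h) (fun _ => h)) s := by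
  have hline : HasDerivAt (fun s : ℝ => x + s • h) h s := by
    simpa using ((hasDerivAt_id s).smul_const h).const_add x
  have hD : HasFDerivAt (iteratedFDeriv ℝ n f) (fderiv ℝ (iteratedFDeriv ℝ n f) (x + s • h))
      (x + s • h) :=
    (hf.differentiable_iteratedFDeriv (mod_cast n.lt_succ_self) _).hasFDerivAt
  rw [iteratedFDeriv_succ_apply_left]
  exact (ContinuousMultilinearMap.apply ℝ (fun _ : Fin n => V) F (fun _ => h)).hasFDerivAt
    |>.comp_hasDerivAt s (hD.comp_hasDerivAt s hline)

theorem iteratedFDeriv_apply_add_sub_eq_integral [CompleteSpace F] (hf : ContDiff ℝ (n + 1) f)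
    (x h : V) :
    iteratedFDeriv ℝ n f (x + h) (fun _ => h) - iteratedFDeriv ℝ n f x (fun _ => h) =
      ∫ s in Icc (0 : ℝ) 1, iteratedFDeriv ℝ (n + 1) f (x + s • h) (fun _ => h) := by
  have hcont : Continuous fun s : ℝ => iteratedFDeriv ℝ (n + 1) f (x + s • h) (fun _ => h) :=
    (continuous_iteratedFDeriv_apply_const hf h).comp (by fun_prop)
  rw [integral_Icc_eq_integral_Ioc, ← intervalIntegral.integral_of_le zero_le_one,
    intervalIntegral.integral_eq_sub_of_hasDerivAt
      (fun s _ => hasDerivAt_iteratedFDeriv_apply_add_smul hf x h s) (hcont.intervalIntegrable 0 1)]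
  simp

theorem integrableOn_univ_pi_Icc_iteratedFDeriv_apply_sum_smul (hf : ContDiff ℝ n f)
    (m : ℕ) (x h : V) :
    IntegrableOn (fun t : Fin m → ℝ => iteratedFDeriv ℝ n f (x + (∑ i, t i) • h) (fun _ => h))
      (univ.pi fun _ => Icc 0 1) :=
  ((continuous_iteratedFDeriv_apply_const hf h).comp (by fun_prop)).continuousOn
    |>.integrableOn_compact (isCompact_univ_pi fun _ => isCompact_Icc)

end IteratedDerivAlongLine

namespace MeasureTheory

variable {F : Type*} [NormedAddCommGroup F] [NormedSpace ℝ F]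

theorem integral_pi_fin_succ {n : ℕ} {α : Type*} [MeasurableSpace α]
    (μ : Fin (n + 1) → Measure α) [∀ i, SigmaFinite (μ i)] {φ : (Fin (n + 1) → α) → F}
    (hφ : Integrable φ (Measure.pi μ)) :
    ∫ x, φ x ∂Measure.pi μ =
      ∫ t, ∫ s, φ (Fin.cons s t) ∂μ 0 ∂Measure.pi fun i => μ i.succ := by
  have e := (measurePreserving_piFinSuccAbove μ 0).symm
  rw [← e.integral_comp', integral_prod_symm]
  · simp_rw [MeasurableEquiv.piFinSuccAbove_symm_apply, Fin.insertNthEquiv, Equiv.coe_fn_mk,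
      Fin.insertNth_zero', Fin.succAbove_zero]
  · exact (e.integrable_comp_emb (MeasurableEquiv.measurableEmbedding _)).2 hφ

theorem setIntegral_univ_pi_fin_succ {n : ℕ} {α : Type*} [MeasureSpace α]
    [SigmaFinite (volume : Measure α)] (S : Fin (n + 1) → Set α) {φ : (Fin (n + 1) → α) → F}
    (hφ : IntegrableOn φ (univ.pi S)) :
    ∫ x in univ.pi S, φ x = ∫ t in univ.pi fun i => S i.succ, ∫ s in S 0, φ (Fin.cons s t) := by
  rw [IntegrableOn, volume_pi, Measure.restrict_pi_pi] at hφ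
  simp only [volume_pi, Measure.restrict_pi_pi]
  exact integral_pi_fin_succ _ hφ

theorem setIntegral_univ_pi_fin_zero [CompleteSpace F] {α : Type*} [MeasureSpace α]
    [SigmaFinite (volume : Measure α)] (S : Fin 0 → Set α) (φ : (Fin 0 → α) → F) :
    ∫ x in univ.pi S, φ x = φ Fin.elim0 := by
  rw [volume_pi, Measure.restrict_pi_pi, Measure.pi_of_empty (x := Fin.elim0), integral_dirac]

end MeasureTheory

theorem iterDiff_eq_integral_general {N : ℕ} (m : ℕ) (f : E N → ℝ)
    (hf : ContDiff ℝ m f) (x h : E N) :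
    iterDiff f h m x =
      ∫ t in Set.univ.pi fun _ : Fin m => Set.Icc (0 : ℝ) 1,
        iteratedFDeriv ℝ m f (x + (∑ i, t i) • h) (fun _ => h) := by
  induction m generalizing x with
  | zero => rw [setIntegral_univ_pi_fin_zero]; simp [iterDiff]
  | succ m ih =>
    have hf' : ContDiff ℝ m f := hf.of_le (mod_cast m.le_succ)
    have hint {k : ℕ} (hk : ContDiff ℝ k f) (y : E N) :=
      integrableOn_univ_pi_Icc_iteratedFDeriv_apply_sum_smul hk m y h
    simp only [iterDiff]
    rw [ih hf' (x + h), ih hf' x, ← integral_sub (hint hf' (x + h)) (hint hf' x),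
      setIntegral_univ_pi_fin_succ _
        (integrableOn_univ_pi_Icc_iteratedFDeriv_apply_sum_smul hf (m + 1) x h)]
    refine setIntegral_congr_fun (MeasurableSet.univ_pi fun _ => measurableSet_Icc) fun t _ => ?_
    rw [add_right_comm, iteratedFDeriv_apply_add_sub_eq_integral hf]
    simp only [Fin.sum_cons, add_comm _ (∑ i, t i), add_smul, add_assoc]

theorem iterDiff_eq_integral {N : ℕ} (m : ℕ) (hm : 0 < m) (f : E N → ℝ)
    (hf : ContDiff ℝ m f) (x h : E N) :
    iterDiff f h m x =
      ∫ t in Set.univ.pi fun _ : Fin m => Set.Icc (0 : ℝ) 1,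
        iteratedFDeriv ℝ m f (x + (∑ i, t i) • h) (fun _ => h) :=
  iterDiff_eq_integral_general m f hf x h
end

section
/- Let K ⊂ ℝ^N be convex, symmetric, containing 0 with nonempty interior, with gauge ‖·‖_K satisfying A|x| ≤ ‖x‖_K. If f ∈ C_c^{m+1}(ℝ^N) with S = ‖f‖_{W^{m+1,∞}}, then for any δ > 0 there is C = C(δ) > 0 such that for all x ∈ ℝ^N and h ∈ ℝ^N \ {0}: | m^{mp} |R^m f(x, x+h)|^p ‖h‖_K^{-mp} − |D^m f(x)(h/‖h‖_K, …, h/‖h‖_K)|^p | ≤ C A^{-m-1} S ‖h‖_K + δ. -/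
open MeasureTheory Filter Set

noncomputable section

noncomputable def Rm {N : ℕ} (m : ℕ) (f : E N → ℝ) (x y : E N) : ℝ :=
  ∑ j ∈ Finset.range (m + 1), (-1 : ℝ) ^ j * (m.choose j : ℝ) *
    f ((((m - j : ℕ) : ℝ) / (m : ℝ)) • x + ((j : ℝ) / (m : ℝ)) • y)

/-!
Write `Δ₁` for the forward difference of step `1` on `ℝ`. With `t = h / m` and
`g s = f (x + s • t)` we have `Rm m f x (x + h) = (-1) ^ m Δ₁^m g 0`. The operator `Δ₁^m` kills
polynomials of degree `< m` and sends `s ^ m` to `m!`, so replacing `g` by its Taylor polynomial of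
degree `m` at `0` produces exactly `g⁽ᵐ⁾ 0 = D^m f x (t, …, t)`, while the Taylor remainders at
`0, …, m` are `O(S ‖t‖ ^ (m + 1))`. After scaling by `(m / ‖h‖_K) ^ m`,
`a = m ^ m |Rm m f x (x + h)| / ‖h‖_K ^ m` and `b = |D^m f x (h / ‖h‖_K, …)|` satisfy
`|a - b| ≤ c S A ^ (-m - 1) ‖h‖_K`. Both are bounded independently of `x` and `h` (`b` by
`S A ^ (-m)`; `a` by this estimate if `‖h‖_K ≤ 1` and by `|Rm m f x y| ≤ 2 ^ m S` otherwise), so the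
mean value theorem for `u ↦ u ^ p` on a bounded interval concludes.
-/

open Finset Nat

lemma abs_fwdDiff_iter_le {M : Type*} [AddCommMonoid M] (h : M) (u : M → ℝ) (n : ℕ) (y : M)
    {B : ℝ} (hu : ∀ k ≤ n, |u (y + k • h)| ≤ B) : |(fwdDiff h)^[n] u y| ≤ 2 ^ n * B := by
  rw [fwdDiff_iter_eq_sum_shift]
  calc |∑ k ∈ range (n + 1), ((-1 : ℤ) ^ (n - k) * n.choose k) • u (y + k • h)|
      ≤ ∑ k ∈ range (n + 1), (n.choose k : ℝ) * B := by
        refine (abs_sum_le_sum_abs _ _).trans (sum_le_sum fun k hk ↦ ?_)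
        rw [zsmul_eq_mul, abs_mul]
        push_cast
        rw [abs_mul, abs_pow, abs_neg, abs_one, one_pow, one_mul, Nat.abs_cast]
        exact mul_le_mul_of_nonneg_left (hu k (by grind)) (Nat.cast_nonneg _)
    _ = 2 ^ n * B := by rw [← sum_mul, ← Nat.cast_sum, Nat.sum_range_choose]; push_cast; rfl

lemma abs_div_pow_mul_fwdDiff_iter_le {M : Type*} [AddCommMonoid M] (h : M) (u : M → ℝ)
    (n : ℕ) (y : M) {B : ℝ} (hu : ∀ z, |u z| ≤ B) {q : ℝ} (hq : 1 ≤ q) :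
    |(n / q) ^ n * (fwdDiff h)^[n] u y| ≤ (2 * n) ^ n * B := by
  have hB : 0 ≤ B := (abs_nonneg _).trans (hu y)
  calc |(n / q) ^ n * (fwdDiff h)^[n] u y| ≤ n ^ n * (2 ^ n * B) := by
        rw [abs_mul, abs_of_nonneg (by positivity)]
        gcongr
        · exact div_le_self (Nat.cast_nonneg _) hq
        · exact abs_fwdDiff_iter_le h u n y fun k _ ↦ hu _
    _ = (2 * n) ^ n * B := by ring

lemma fwdDiff_iter_sum_range_succ_mul_pow {R : Type*} [CommRing R] (P : ℕ → R) (n : ℕ) :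
    (fwdDiff 1)^[n] (fun r : R ↦ ∑ k ∈ range (n + 1), P k * r ^ k) = fun _ ↦ P n * n ! := by
  simp_rw [sum_range_succ]
  rw [show (fun r : R ↦ ∑ k ∈ range n, P k * r ^ k + P n * r ^ n) =
      (fun r ↦ ∑ k ∈ range n, P k * r ^ k) + P n • fun r ↦ r ^ n from rfl,
    fwdDiff_iter_add, fwdDiff_iter_const_smul, fwdDiff_iter_sum_mul_pow_eq_zero,
    fwdDiff_iter_eq_factorial]
  ext; simp

lemma fwdDiff_iter_eq_fwdDiff_iter_comp_add_smul {F G : Type*} [AddCommGroup F] [Module ℝ F]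
    [AddCommGroup G] (f : F → G) (x t : F) (n : ℕ) :
    (fwdDiff t)^[n] f x = (fwdDiff 1)^[n] (fun s : ℝ ↦ f (x + s • t)) 0 := by
  simp [fwdDiff_iter_eq_sum_shift, Nat.cast_smul_eq_nsmul]

lemma abs_sub_taylor_le {g : ℝ → ℝ} {n : ℕ} (hg : ContDiff ℝ (n + 1) g) {B : ℝ}
    (hB : ∀ s, |iteratedDeriv (n + 1) g s| ≤ B) (x : ℝ) :
    |g x - ∑ k ∈ range (n + 1), iteratedDeriv k g 0 / k ! * x ^ k| ≤
      B * |x| ^ (n + 1) / (n + 1)! := by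
  rcases eq_or_ne x 0 with rfl | hx
  · simp [sum_range_succ']
  obtain ⟨x', -, hx'⟩ := taylor_mean_remainder_lagrange_iteratedDeriv hx.symm hg.contDiffOn
  have htaylor : taylorWithinEval g n (uIcc 0 x) 0 x =
      ∑ k ∈ range (n + 1), iteratedDeriv k g 0 / k ! * x ^ k := by
    rw [taylor_within_apply]
    refine sum_congr rfl fun k hk ↦ ?_
    rw [iteratedDerivWithin_eq_iteratedDeriv (uniqueDiffOn_uIcc hx.symm)
      (hg.contDiffAt.of_le (by norm_cast; grind)) left_mem_uIcc, smul_eq_mul, sub_zero]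
    ring
  rw [← htaylor, hx', sub_zero, abs_div, abs_mul, abs_pow, Nat.abs_cast]
  gcongr
  exact hB x'

lemma abs_fwdDiff_iter_sub_iteratedDeriv_le {g : ℝ → ℝ} {m : ℕ} (hg : ContDiff ℝ (m + 1) g)
    {B : ℝ} (hB : ∀ s, |iteratedDeriv (m + 1) g s| ≤ B) :
    |(fwdDiff 1)^[m] g 0 - iteratedDeriv m g 0| ≤ 2 ^ m * (B * m ^ (m + 1) / (m + 1)!) := by
  set P : ℝ → ℝ := fun s ↦ ∑ k ∈ range (m + 1), iteratedDeriv k g 0 / k ! * s ^ k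
  have hP : (fwdDiff 1)^[m] P 0 = iteratedDeriv m g 0 := by
    rw [fwdDiff_iter_sum_range_succ_mul_pow]
    field_simp
  have hsub : (fwdDiff 1)^[m] g 0 - (fwdDiff 1)^[m] P 0 = (fwdDiff 1)^[m] (g - P) 0 := by
    simp [fwdDiff_iter_eq_sum_shift, smul_sub]
  rw [← hP, hsub]
  refine abs_fwdDiff_iter_le _ _ _ _ fun k hk ↦ ?_
  have hB0 : 0 ≤ B := (abs_nonneg _).trans (hB 0)
  calc |(g - P) (0 + k • 1)| ≤ B * |(k : ℝ)| ^ (m + 1) / (m + 1)! := by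
        simpa using abs_sub_taylor_le hg hB k
    _ ≤ B * m ^ (m + 1) / (m + 1)! := by
        rw [Nat.abs_cast]; gcongr

lemma iteratedDeriv_comp_add_smul {F : Type*} [NormedAddCommGroup F] [NormedSpace ℝ F]
    {f : F → ℝ} {n : WithTop ℕ∞} (hf : ContDiff ℝ n f) (x t : F) {k : ℕ} (hk : k ≤ n) (s : ℝ) :
    iteratedDeriv k (fun s : ℝ ↦ f (x + s • t)) s = iteratedFDeriv ℝ k f (x + s • t) fun _ ↦ t := by
  induction k generalizing s with
  | zero => simp
  | succ k ih =>
    rw [iteratedDeriv_succ, funext (ih (le_trans (by norm_cast; omega) hk)),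
      (hf.contDiffAt.of_le hk).deriv_fderiv_add_smul]

lemma abs_fwdDiff_iter_sub_iteratedFDeriv_le {F : Type*} [NormedAddCommGroup F]
    [NormedSpace ℝ F] {f : F → ℝ} {m : ℕ} (hf : ContDiff ℝ (m + 1) f) {S : ℝ}
    (hS : ∀ z, ‖iteratedFDeriv ℝ (m + 1) f z‖ ≤ S) (x t : F) :
    |(fwdDiff t)^[m] f x - iteratedFDeriv ℝ m f x (fun _ ↦ t)| ≤
      2 ^ m * m ^ (m + 1) / (m + 1)! * S * ‖t‖ ^ (m + 1) := by
  have hg : ContDiff ℝ (m + 1) fun s : ℝ ↦ f (x + s • t) := hf.comp (by fun_prop)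
  have hB : ∀ s, |iteratedDeriv (m + 1) (fun s : ℝ ↦ f (x + s • t)) s| ≤ S * ‖t‖ ^ (m + 1) := by
    intro s
    rw [iteratedDeriv_comp_add_smul hf x t le_rfl]
    simpa using (iteratedFDeriv ℝ (m + 1) f (x + s • t)).le_of_opNorm_le (hS _) fun _ ↦ t
  have := abs_fwdDiff_iter_sub_iteratedDeriv_le hg hB
  rw [iteratedDeriv_comp_add_smul hf x t (by norm_cast; omega), zero_smul, add_zero] at this
  rw [fwdDiff_iter_eq_fwdDiff_iter_comp_add_smul]
  convert this using 1
  ring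

lemma abs_div_pow_mul_fwdDiff_iter_sub_iteratedFDeriv_le {F : Type*} [NormedAddCommGroup F]
    [NormedSpace ℝ F] {f : F → ℝ} {m : ℕ} (hm : m ≠ 0) (hf : ContDiff ℝ (m + 1) f) {S : ℝ}
    (hS : ∀ z, ‖iteratedFDeriv ℝ (m + 1) f z‖ ≤ S) (x h : F) {q : ℝ} (hq : 0 < q) :
    |(m / q) ^ m * (fwdDiff ((m : ℝ)⁻¹ • h))^[m] f x - iteratedFDeriv ℝ m f x (fun _ ↦ q⁻¹ • h)| ≤
      2 ^ m * m ^ m / (m + 1)! * S * ‖q⁻¹ • h‖ ^ (m + 1) * q := by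
  have hm' : (m : ℝ) ≠ 0 := by exact_mod_cast hm
  set t := (m : ℝ)⁻¹ • h
  have hr : 0 ≤ ((m : ℝ) / q) ^ m := by positivity
  have hD : iteratedFDeriv ℝ m f x (fun _ ↦ q⁻¹ • h) =
      (m / q) ^ m * iteratedFDeriv ℝ m f x (fun _ ↦ t) := by
    have : q⁻¹ • h = (m / q) • t := by rw [smul_smul]; field_simp
    simp [this, ContinuousMultilinearMap.map_smul_univ, div_pow]
  calc _ = (m / q) ^ m * |(fwdDiff t)^[m] f x - iteratedFDeriv ℝ m f x (fun _ ↦ t)| := by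
        rw [hD, ← mul_sub, abs_mul, abs_of_nonneg hr]
    _ ≤ (m / q) ^ m * (2 ^ m * m ^ (m + 1) / (m + 1)! * S * ‖t‖ ^ (m + 1)) := by
        gcongr; exact abs_fwdDiff_iter_sub_iteratedFDeriv_le hf hS x t
    _ = _ := by
        simp only [t, norm_smul, norm_inv, Real.norm_natCast, Real.norm_of_nonneg hq.le, mul_pow,
          inv_pow, div_pow, pow_succ]
        field_simp

lemma Rm_add_eq_fwdDiff_iter {N m : ℕ} (hm : m ≠ 0) (f : E N → ℝ) (x h : E N) :
    Rm m f x (x + h) = (-1) ^ m * (fwdDiff ((m : ℝ)⁻¹ • h))^[m] f x := by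
  rw [Rm, fwdDiff_iter_eq_sum_shift, mul_sum]
  refine sum_congr rfl fun j hj ↦ ?_
  have hjm : j ≤ m := by grind
  have hpoint :
      (((m - j : ℕ) : ℝ) / m) • x + ((j : ℝ) / m) • (x + h) = x + j • ((m : ℝ)⁻¹ • h) := by
    have hm' : (m : ℝ) ≠ 0 := by exact_mod_cast hm
    rw [Nat.cast_sub hjm, ← Nat.cast_smul_eq_nsmul ℝ, smul_smul, smul_add, ← add_assoc, ← add_smul,
      show ((m : ℝ) - j) / m + j / m = 1 by field_simp; ring, one_smul, div_eq_mul_inv]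
  have hsign : (-1 : ℝ) ^ m * (-1) ^ (m - j) = (-1) ^ j := by
    rw [← pow_add, show m + (m - j) = j + 2 * (m - j) by omega, pow_add, pow_mul]
    simp
  rw [hpoint, zsmul_eq_mul]
  push_cast
  rw [← hsign]
  ring

lemma mul_abs_Rm_rpow_div_rpow_eq {N m : ℕ} (hm : m ≠ 0) (p : ℝ) (f : E N → ℝ) (x h : E N) {q : ℝ}
    (hq : 0 ≤ q) :
    (m : ℝ) ^ ((m : ℝ) * p) * |Rm m f x (x + h)| ^ p / q ^ ((m : ℝ) * p) =
      |(m / q) ^ m * (fwdDiff ((m : ℝ)⁻¹ • h))^[m] f x| ^ p := by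
  rw [Rm_add_eq_fwdDiff_iter hm, abs_mul, abs_mul, abs_pow, abs_neg, abs_one, one_pow, one_mul,
    abs_of_nonneg (by positivity : (0 : ℝ) ≤ (m / q) ^ m),
    Real.mul_rpow (by positivity) (abs_nonneg _),
    div_pow, Real.div_rpow (by positivity) (by positivity), Real.rpow_mul (by positivity),
    Real.rpow_mul hq, Real.rpow_natCast, Real.rpow_natCast]
  ring

lemma norm_inv_smul_le_inv {F : Type*} [NormedAddCommGroup F] [NormedSpace ℝ F] {A q : ℝ}
    {h : F} (hA : 0 < A) (hq : 0 < q) (hAq : A * ‖h‖ ≤ q) : ‖q⁻¹ • h‖ ≤ A⁻¹ := by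
  rw [norm_smul, norm_inv, Real.norm_of_nonneg hq.le, inv_mul_le_iff₀ hq, ← div_eq_mul_inv,
    le_div_iff₀ hA, mul_comm]
  exact hAq

lemma abs_rpow_sub_rpow_le {p M a b : ℝ} (hp : 1 ≤ p) (ha : a ∈ Icc 0 M) (hb : b ∈ Icc 0 M) :
    |a ^ p - b ^ p| ≤ p * M ^ (p - 1) * |a - b| := by
  have hderiv : ∀ u ∈ Icc 0 M, HasDerivWithinAt (· ^ p) (p * u ^ (p - 1)) (Icc 0 M) u :=
    fun u _ ↦ (Real.hasDerivAt_rpow_const (Or.inr hp)).hasDerivWithinAt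
  have hbound : ∀ u ∈ Icc 0 M, ‖p * u ^ (p - 1)‖ ≤ p * M ^ (p - 1) := by
    intro u hu
    rw [Real.norm_eq_abs, abs_of_nonneg (by have := hu.1; positivity)]
    exact mul_le_mul_of_nonneg_left (Real.rpow_le_rpow hu.1 hu.2 (by linarith)) (by linarith)
  simpa [Real.norm_eq_abs] using
    (convex_Icc 0 M).norm_image_sub_le_of_norm_hasDerivWithin_le hderiv hbound hb ha

lemma abs_rpow_sub_rpow_le_of_abs_sub_le {p a b β γ ε q : ℝ} (hp : 1 ≤ p) (ha : 0 ≤ a)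
    (hb : b ∈ Icc 0 β) (hε : 0 ≤ ε) (hab : |a - b| ≤ ε * q)
    (haγ : 1 ≤ q → a ≤ γ) : |a ^ p - b ^ p| ≤ p * max (β + ε) γ ^ (p - 1) * (ε * q) := by
  have haM : a ≤ max (β + ε) γ := by
    rcases le_total 1 q with hq1 | hq1
    · exact (haγ hq1).trans (le_max_right _ _)
    · refine le_max_of_le_left ?_
      have : ε * q ≤ ε := mul_le_of_le_one_right hε hq1
      linarith [le_abs_self (a - b), hb.2]
  have hbM : b ≤ max (β + ε) γ := le_max_of_le_left (by linarith [hb.2])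
  refine (abs_rpow_sub_rpow_le hp ⟨ha, haM⟩ ⟨hb.1, hbM⟩).trans ?_
  have : 0 ≤ max (β + ε) γ := ha.trans haM
  gcongr

theorem Rm_uniform_approx_general {N : ℕ} (m : ℕ) (hm : 0 < m) (p : ℝ) (hp1 : 1 < p)
    (K : Set (E N))
    (A : ℝ) (hA : 0 < A) (hAle : ∀ x : E N, A * ‖x‖ ≤ gauge K x)
    (f : E N → ℝ) (hf : ContDiff ℝ (m + 1) f)
    (S : ℝ) (hS : ∀ x : E N, ∀ k ≤ m + 1, ‖iteratedFDeriv ℝ k f x‖ ≤ S) :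
    ∀ δ > 0, ∃ C > 0, ∀ x : E N, ∀ h : E N, h ≠ 0 →
      |(m : ℝ) ^ ((m : ℝ) * p) * |Rm m f x (x + h)| ^ p / gauge K h ^ ((m : ℝ) * p) -
          |iteratedFDeriv ℝ m f x (fun _ => (gauge K h)⁻¹ • h)| ^ p| ≤
        C * A ^ (-(m : ℝ) - 1) * S * gauge K h + δ := by
  intro δ hδ
  have hS0 : 0 ≤ S := (norm_nonneg _).trans (hS 0 0 (Nat.zero_le _))
  set c : ℝ := 2 ^ m * m ^ m / (m + 1)!
  set M := max (S * A⁻¹ ^ m + c * S * A⁻¹ ^ (m + 1)) ((2 * m) ^ m * S)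
  refine ⟨p * M ^ (p - 1) * c + 1, by positivity, fun x h hh ↦ ?_⟩
  set q := gauge K h
  have hq : 0 < q := (mul_pos hA (norm_pos_iff.2 hh)).trans_le (hAle h)
  have hu : ‖q⁻¹ • h‖ ≤ A⁻¹ := norm_inv_smul_le_inv hA hq (hAle h)
  set Δ := (m / q) ^ m * (fwdDiff ((m : ℝ)⁻¹ • h))^[m] f x
  set D := iteratedFDeriv ℝ m f x (fun _ ↦ q⁻¹ • h)
  have hdiff : |(|Δ| - |D|)| ≤ c * S * A⁻¹ ^ (m + 1) * q :=
    (abs_abs_sub_abs_le_abs_sub _ _).trans <| (abs_div_pow_mul_fwdDiff_iter_sub_iteratedFDeriv_le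
      hm.ne' hf (fun z ↦ hS z _ le_rfl) x h hq).trans (by gcongr)
  have hD : |D| ≤ S * A⁻¹ ^ m := by
    simpa using
      (iteratedFDeriv ℝ m f x).le_mul_prod_of_opNorm_le_of_le (hS x m (by omega)) fun _ ↦ hu
  have hΔ : 1 ≤ q → |Δ| ≤ (2 * m) ^ m * S := fun hq1 ↦
    abs_div_pow_mul_fwdDiff_iter_le _ f m x (fun z ↦ by simpa using hS z 0 (by omega)) hq1
  have key := abs_rpow_sub_rpow_le_of_abs_sub_le hp1.le (abs_nonneg Δ) ⟨abs_nonneg D, hD⟩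
    (by positivity) hdiff hΔ
  have hA' : A ^ (-(m : ℝ) - 1) = A⁻¹ ^ (m + 1) := by
    rw [show -(m : ℝ) - 1 = -((m + 1 : ℕ) : ℝ) by push_cast; ring, Real.rpow_neg hA.le,
      Real.rpow_natCast, inv_pow]
  rw [mul_abs_Rm_rpow_div_rpow_eq hm.ne' p f x h hq.le, hA']
  have : 0 ≤ A⁻¹ ^ (m + 1) * S * q := by positivity
  linarith

theorem Rm_uniform_approx {N : ℕ} (m : ℕ) (hm : 0 < m) (p : ℝ) (hp1 : 1 < p)
    (K : Set (E N)) (hKconv : Convex ℝ K) (hKsym : ∀ x ∈ K, -x ∈ K)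
    (hK0 : (0 : E N) ∈ K) (hKint : (interior K).Nonempty)
    (hKbd : Bornology.IsBounded K)
    (A : ℝ) (hA : 0 < A) (hAle : ∀ x : E N, A * ‖x‖ ≤ gauge K x)
    (f : E N → ℝ) (hf : ContDiff ℝ (m + 1) f) (hsupp : HasCompactSupport f)
    (S : ℝ) (hS : ∀ x : E N, ∀ k ≤ m + 1, ‖iteratedFDeriv ℝ k f x‖ ≤ S) :
    ∀ δ > 0, ∃ C > 0, ∀ x : E N, ∀ h : E N, h ≠ 0 →
      |(m : ℝ) ^ ((m : ℝ) * p) * |Rm m f x (x + h)| ^ p / gauge K h ^ ((m : ℝ) * p) -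
          |iteratedFDeriv ℝ m f x (fun _ => (gauge K h)⁻¹ • h)| ^ p| ≤
        C * A ^ (-(m : ℝ) - 1) * S * gauge K h + δ :=
  Rm_uniform_approx_general m hm p hp1 K A hA hAle f hf S hS
end
end
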